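/- arXiv:2012.00149 — 2 statements merged into one kernel-verified Lean document; each statement's English description precedes it below -/
import Mathlib

section
/- Let ω > 0 and let σ, μ : ℝ³ → ℝ be C² functions with σ ≥ σ₀ > 0 and μ ≥ μ₀ > 0 for some constants σ₀, μ₀. Set α := log σ and β := log μ. Then for every C² vector field H : ℝ³ → ℂ³, the curl–curl equation curl(σ^{−1} curl H) − iω μ H = 0 on ℝ³ holds if and only if both −ΔH − ∇(∇β · H) − ∇α × (curl H) − iω σ μ H = 0 and div(μ H) = 0 hold on ℝ³. -/
noncomputable section

/-- Partial derivative `∂ⱼ f` of a complex-valued function on `ℝ³`. -/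
def pdC (j : Fin 3) (f : (Fin 3 → ℝ) → ℂ) (x : Fin 3 → ℝ) : ℂ :=
  fderiv ℝ f x (Pi.single j 1)

/-- Partial derivative `∂ⱼ g` of a real-valued function on `ℝ³`. -/
def pdR (j : Fin 3) (g : (Fin 3 → ℝ) → ℝ) (x : Fin 3 → ℝ) : ℝ :=
  fderiv ℝ g x (Pi.single j 1)

/-- The Laplacian `Δf = Σⱼ ∂ⱼ²f` of a complex-valued function on `ℝ³`. -/
def lapC (f : (Fin 3 → ℝ) → ℂ) (x : Fin 3 → ℝ) : ℂ := ∑ j, pdC j (pdC j f) x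

/-- The curl of a vector field `X : ℝ³ → ℂ³` (zero-based indices). -/
def curl3 (X : (Fin 3 → ℝ) → (Fin 3 → ℂ)) (x : Fin 3 → ℝ) : Fin 3 → ℂ :=
  ![pdC 1 (fun z => X z 2) x - pdC 2 (fun z => X z 1) x,
    pdC 2 (fun z => X z 0) x - pdC 0 (fun z => X z 2) x,
    pdC 0 (fun z => X z 1) x - pdC 1 (fun z => X z 0) x]

/-- The cross product on `ℂ³`. -/
def crossC (u v : Fin 3 → ℂ) : Fin 3 → ℂ :=
  ![u 1 * v 2 - u 2 * v 1, u 2 * v 0 - u 0 * v 2, u 0 * v 1 - u 1 * v 0]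

open MeasureTheory
open scoped Convolution Topology

abbrev E3 := Fin 3 → ℝ
abbrev Lsm : ℝ →L[ℝ] ℂ →L[ℝ] ℂ := ContinuousLinearMap.lsmul ℝ ℝ

/-! ### basic partial-derivative lemmas -/

lemma pdC_add {x : E3} {f g : E3 → ℂ} (hf : DifferentiableAt ℝ f x)
    (hg : DifferentiableAt ℝ g x) (j : Fin 3) :
    pdC j (fun z => f z + g z) x = pdC j f x + pdC j g x := by
  simp [pdC, fderiv_fun_add hf hg]

lemma pdC_sub {x : E3} {f g : E3 → ℂ} (hf : DifferentiableAt ℝ f x)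
    (hg : DifferentiableAt ℝ g x) (j : Fin 3) :
    pdC j (fun z => f z - g z) x = pdC j f x - pdC j g x := by
  simp [pdC, fderiv_fun_sub hf hg]

lemma pdC_const_mul {x : E3} {f : E3 → ℂ} (hf : DifferentiableAt ℝ f x) (c : ℂ) (j : Fin 3) :
    pdC j (fun z => c * f z) x = c * pdC j f x := by
  simp [pdC, fderiv_const_mul hf c]

lemma pdC_sum {ι : Type*} {x : E3} {s : Finset ι} {f : ι → E3 → ℂ}
    (hf : ∀ i ∈ s, DifferentiableAt ℝ (f i) x) (j : Fin 3) :
    pdC j (fun z => ∑ i ∈ s, f i z) x = ∑ i ∈ s, pdC j (f i) x := by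
  simp [pdC, fderiv_fun_sum hf]

lemma hasFDerivAt_ofReal {x : E3} {g : E3 → ℝ} {g' : E3 →L[ℝ] ℝ} (hg : HasFDerivAt g g' x) :
    HasFDerivAt (fun z => ((g z : ℝ) : ℂ)) (Complex.ofRealCLM.comp g') x :=
  Complex.ofRealCLM.hasFDerivAt.comp x hg

lemma pdC_real_mul {x : E3} {g : E3 → ℝ} {f : E3 → ℂ} (hg : DifferentiableAt ℝ g x)
    (hf : DifferentiableAt ℝ f x) (j : Fin 3) :
    pdC j (fun z => (g z : ℂ) * f z) x = (pdR j g x : ℂ) * f x + (g x : ℂ) * pdC j f x := by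
  have h := (hasFDerivAt_ofReal hg.hasFDerivAt).fun_mul hf.hasFDerivAt
  have h2 := h.fderiv
  simp only [pdC, pdR, h2]
  simp [hg.hasFDerivAt.fderiv]
  ring

lemma pdR_log {g : E3 → ℝ} {x : E3} (hg : DifferentiableAt ℝ g x) (hgx : g x ≠ 0) (j : Fin 3) :
    pdR j (fun w => Real.log (g w)) x = (g x)⁻¹ * pdR j g x := by
  have h := (Real.hasDerivAt_log hgx).comp_hasFDerivAt x hg.hasFDerivAt
  have h2 : fderiv ℝ (fun w => Real.log (g w)) x = (g x)⁻¹ • fderiv ℝ g x := h.fderiv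
  simp [pdR, h2]

lemma contDiff_pdC {n : ℕ} {f : E3 → ℂ} (hf : ContDiff ℝ (n + 1) f) (j : Fin 3) :
    ContDiff ℝ n (fun x => pdC j f x) := by
  have hf' : ContDiff ℝ ((n : WithTop ℕ∞) + 1) f := by exact_mod_cast hf
  have h : ContDiff ℝ n (fderiv ℝ f) := (contDiff_succ_iff_fderiv.mp hf').2.2
  exact (ContinuousLinearMap.apply ℝ ℂ (Pi.single j 1)).contDiff.comp h

lemma contDiff_pdR {n : ℕ} {g : E3 → ℝ} (hg : ContDiff ℝ (n + 1) g) (j : Fin 3) :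
    ContDiff ℝ n (fun x => pdR j g x) := by
  have hg' : ContDiff ℝ ((n : WithTop ℕ∞) + 1) g := by exact_mod_cast hg
  have h : ContDiff ℝ n (fderiv ℝ g) := (contDiff_succ_iff_fderiv.mp hg').2.2
  exact (ContinuousLinearMap.apply ℝ ℝ (Pi.single j 1)).contDiff.comp h

lemma pdC_comm {f : E3 → ℂ} (hf : ContDiff ℝ 2 f) (x : E3) (i j : Fin 3) :
    pdC i (pdC j f) x = pdC j (pdC i f) x := by
  have hdf : Differentiable ℝ f := hf.differentiable (by norm_num)
  have h1 : ContDiff ℝ 1 (fderiv ℝ f) := by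
    have hf' : ContDiff ℝ ((1 : WithTop ℕ∞) + 1) f := by exact_mod_cast hf
    exact (contDiff_succ_iff_fderiv.mp hf').2.2
  have hd2 : DifferentiableAt ℝ (fderiv ℝ f) x := h1.differentiable (by norm_num) x
  have key : ∀ v w, fderiv ℝ (fderiv ℝ f) x v w = fderiv ℝ (fderiv ℝ f) x w v :=
    second_derivative_symmetric (fun y => (hdf y).hasFDerivAt) hd2.hasFDerivAt
  have expand : ∀ a b : Fin 3, pdC a (pdC b f) x
      = fderiv ℝ (fderiv ℝ f) x (Pi.single a 1) (Pi.single b 1) := by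
    intro a b
    have h2 : HasFDerivAt (fun y => fderiv ℝ f y (Pi.single b 1))
        (((ContinuousLinearMap.apply ℝ ℂ ((Pi.single b 1 : E3)))).comp
          (fderiv ℝ (fderiv ℝ f) x)) x :=
      ((ContinuousLinearMap.apply ℝ ℂ ((Pi.single b 1 : E3))).hasFDerivAt).comp x hd2.hasFDerivAt
    have hrw : pdC b f = fun y => fderiv ℝ f y (Pi.single b 1) := rfl
    simp only [pdC, hrw]
    rw [h2.fderiv]
    rfl
  rw [expand, expand, key]

/-! ### convolution lemmas -/

lemma pdC_conv {k : E3 → ℝ} {f : E3 → ℂ} (hk : Continuous k) (hf : ContDiff ℝ 1 f)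
    (hcf : HasCompactSupport f) (j : Fin 3) (x : E3) :
    pdC j (k ⋆[Lsm, volume] f) x = (k ⋆[Lsm, volume] (fun z => pdC j f z)) x := by
  have h := hcf.hasFDerivAt_convolution_right Lsm (hk.locallyIntegrable (μ := volume)) hf x
  have h2 : pdC j (k ⋆[Lsm, volume] f) x
      = (k ⋆[Lsm.precompR E3, volume] fderiv ℝ f) x (Pi.single j 1) := by
    simp [pdC, h.fderiv]
  rw [h2, convolution_precompR_apply Lsm (hk.locallyIntegrable (μ := volume)) (hcf.fderiv ℝ)
    (hf.continuous_fderiv (by norm_num)) x (Pi.single j 1)]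
  rfl

lemma conv_sub {k : E3 → ℝ} {f g : E3 → ℂ} (hk : Continuous k)
    (hf : Continuous f) (hcf : HasCompactSupport f)
    (hg : Continuous g) (hcg : HasCompactSupport g) (x : E3) :
    (k ⋆[Lsm, volume] (fun z => f z - g z)) x
      = (k ⋆[Lsm, volume] f) x - (k ⋆[Lsm, volume] g) x := by
  have hef := hcf.convolutionExists_right Lsm (hk.locallyIntegrable (μ := volume)) hf x
  have heg := hcg.convolutionExists_right Lsm (hk.locallyIntegrable (μ := volume)) hg x
  simp only [convolution_def]
  rw [← integral_sub hef heg]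
  congr 1; ext t; simp [smul_sub]

lemma conv_add {k : E3 → ℝ} {f g : E3 → ℂ} (hk : Continuous k)
    (hf : Continuous f) (hcf : HasCompactSupport f)
    (hg : Continuous g) (hcg : HasCompactSupport g) (x : E3) :
    (k ⋆[Lsm, volume] (fun z => f z + g z)) x
      = (k ⋆[Lsm, volume] f) x + (k ⋆[Lsm, volume] g) x := by
  have hef := hcf.convolutionExists_right Lsm (hk.locallyIntegrable (μ := volume)) hf x
  have heg := hcg.convolutionExists_right Lsm (hk.locallyIntegrable (μ := volume)) hg x
  simp only [convolution_def]
  rw [← integral_add hef heg]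
  congr 1; ext t; simp [smul_add]

/-! ### div-curl of a compactly supported field -/

lemma divcurl_compact (V : E3 → Fin 3 → ℂ)
    (hV : ∀ i, ContDiff ℝ 1 (fun z => V z i))
    (hcV : ∀ i, HasCompactSupport (fun z => V z i))
    (hcurl : ∀ i, ContDiff ℝ 1 (fun z => curl3 V z i)) (x : E3) :
    ∑ i, pdC i (fun z => curl3 V z i) x = 0 := by
  -- compact support of curl components
  have hccurl : ∀ i : Fin 3, HasCompactSupport (fun z => curl3 V z i) := by
    have hsub : ∀ a b c d : Fin 3, HasCompactSupport
        (fun z => pdC a (fun w => V w b) z - pdC c (fun w => V w d) z) := by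
      intro a b c d
      exact HasCompactSupport.comp₂_left ((hcV b).fderiv_apply ℝ (Pi.single a 1))
        ((hcV d).fderiv_apply ℝ (Pi.single c 1)) (sub_zero 0)
    intro i
    fin_cases i
    · exact hsub 1 2 2 1
    · exact hsub 2 0 0 2
    · exact hsub 0 1 1 0
  -- the function we want to vanish
  set g : E3 → ℂ := fun x => ∑ i, pdC i (fun z => curl3 V z i) x with hg
  have hgc : Continuous g := by
    apply continuous_finset_sum
    intro i _
    exact (contDiff_pdC (n := 0) (hcurl i) i).continuous
  -- step 1 : convolution with any smooth compactly supported kernel kills g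
  have step1 : ∀ k : E3 → ℝ, ContDiff ℝ 2 k → HasCompactSupport k →
      ∀ x, (k ⋆[Lsm, volume] g) x = 0 := by
    intro k hk hck x
    have hkc : Continuous k := hk.continuous
    -- mollified field
    set FF : E3 → Fin 3 → ℂ := fun z b => (k ⋆[Lsm, volume] fun w => V w b) z with hFF
    have hFF2 : ∀ b : Fin 3, ContDiff ℝ 2 (fun z => FF z b) := fun b =>
      hck.contDiff_convolution_left Lsm hk
        ((hV b).continuous.locallyIntegrable (μ := volume))
    -- curl of mollified field = mollified curl
    have claim2 : ∀ i : Fin 3,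
        (fun z => curl3 FF z i) = fun z => (k ⋆[Lsm, volume] fun w => curl3 V w i) z := by
      have key : ∀ a b c d : Fin 3,
          (fun z => pdC a (fun w => FF w b) z - pdC c (fun w => FF w d) z)
            = fun z => (k ⋆[Lsm, volume]
                fun w => pdC a (fun u => V u b) w - pdC c (fun u => V u d) w) z := by
        intro a b c d
        funext z
        have h1 : pdC a (fun w => FF w b) z
            = (k ⋆[Lsm, volume] fun w => pdC a (fun u => V u b) w) z :=
          pdC_conv hkc (hV b) (hcV b) a z
        have h2 : pdC c (fun w => FF w d) z
            = (k ⋆[Lsm, volume] fun w => pdC c (fun u => V u d) w) z :=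
          pdC_conv hkc (hV d) (hcV d) c z
        rw [h1, h2, conv_sub hkc ((contDiff_pdC (n := 0) (hV b) a).continuous)
          ((hcV b).fderiv_apply ℝ _) ((contDiff_pdC (n := 0) (hV d) c).continuous)
          ((hcV d).fderiv_apply ℝ _) z]
      intro i
      fin_cases i
      · exact key 1 2 2 1
      · exact key 2 0 0 2
      · exact key 0 1 1 0
    -- Schwarz : div curl of the smooth mollified field is zero
    have claim3 : ∑ i, pdC i (fun z => curl3 FF z i) x = 0 := by
      have hd : ∀ a b : Fin 3, DifferentiableAt ℝ (fun z => pdC a (fun w => FF w b) z) x :=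
        fun a b => ((contDiff_pdC (n := 1) (hFF2 b) a).differentiable (by norm_num)) x
      have e0 : pdC 0 (fun z => curl3 FF z 0) x
          = pdC 0 (pdC 1 (fun w => FF w 2)) x - pdC 0 (pdC 2 (fun w => FF w 1)) x :=
        pdC_sub (hd 1 2) (hd 2 1) 0
      have e1 : pdC 1 (fun z => curl3 FF z 1) x
          = pdC 1 (pdC 2 (fun w => FF w 0)) x - pdC 1 (pdC 0 (fun w => FF w 2)) x :=
        pdC_sub (hd 2 0) (hd 0 2) 1
      have e2 : pdC 2 (fun z => curl3 FF z 2) x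
          = pdC 2 (pdC 0 (fun w => FF w 1)) x - pdC 2 (pdC 1 (fun w => FF w 0)) x :=
        pdC_sub (hd 0 1) (hd 1 0) 2
      rw [Fin.sum_univ_three, e0, e1, e2,
        pdC_comm (hFF2 2) x 0 1, pdC_comm (hFF2 1) x 0 2, pdC_comm (hFF2 0) x 1 2]
      ring
    -- put everything together
    have hgsplit : (k ⋆[Lsm, volume] g) x
        = ∑ i, (k ⋆[Lsm, volume] fun z => pdC i (fun w => curl3 V w i) z) x := by
      have c0 : Continuous fun z => pdC 0 (fun w => curl3 V w 0) z :=
        (contDiff_pdC (n := 0) (hcurl 0) 0).continuous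
      have c1 : Continuous fun z => pdC 1 (fun w => curl3 V w 1) z :=
        (contDiff_pdC (n := 0) (hcurl 1) 1).continuous
      have c2 : Continuous fun z => pdC 2 (fun w => curl3 V w 2) z :=
        (contDiff_pdC (n := 0) (hcurl 2) 2).continuous
      have s0 : HasCompactSupport fun z => pdC 0 (fun w => curl3 V w 0) z :=
        (hccurl 0).fderiv_apply ℝ _
      have s1 : HasCompactSupport fun z => pdC 1 (fun w => curl3 V w 1) z :=
        (hccurl 1).fderiv_apply ℝ _
      have s2 : HasCompactSupport fun z => pdC 2 (fun w => curl3 V w 2) z :=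
        (hccurl 2).fderiv_apply ℝ _
      have hgeq : g = fun x => (fun z => pdC 0 (fun w => curl3 V w 0) z) x
          + ((fun z => pdC 1 (fun w => curl3 V w 1) z) x
            + (fun z => pdC 2 (fun w => curl3 V w 2) z) x) := by
        funext y; simp [hg, Fin.sum_univ_three]; ring
      rw [hgeq, Fin.sum_univ_three]
      beta_reduce
      rw [conv_add hkc c0 s0 (g := fun z => pdC 1 (fun w => curl3 V w 1) z + pdC 2 (fun w => curl3 V w 2) z) (c1.add c2) (s1.add s2) x,
        conv_add hkc c1 s1 c2 s2 x]
      ring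
    rw [hgsplit, Fin.sum_univ_three]
    have hterm : ∀ i : Fin 3,
        (k ⋆[Lsm, volume] fun z => pdC i (fun w => curl3 V w i) z) x
          = pdC i (fun z => curl3 FF z i) x := by
      intro i
      rw [← pdC_conv hkc (hcurl i) (hccurl i) i x]
      congr 1
      exact (claim2 i).symm
    rw [hterm 0, hterm 1, hterm 2, ← Fin.sum_univ_three (f := fun i => pdC i (fun z => curl3 FF z i) x)]
    exact claim3
  -- step 2 : bump-function limit
  let φ : ℕ → ContDiffBump (0 : E3) := fun n =>
    ⟨1 / (n + 2), 1 / (n + 1), by positivity, by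
      apply one_div_lt_one_div_of_lt <;> [positivity; norm_num]⟩
  have hφ : Filter.Tendsto (fun n => (φ n).rOut) Filter.atTop (𝓝 0) := by
    have : ∀ n : ℕ, (φ n).rOut = 1 / ((n : ℝ) + 1) := fun n => rfl
    simp only [this]
    exact tendsto_one_div_add_atTop_nhds_zero_nat
  have hlim := ContDiffBump.convolution_tendsto_right_of_continuous (μ := volume)
    (φ := φ) (l := Filter.atTop) hφ hgc x
  have hzero : (fun n => (((φ n).normed volume) ⋆[Lsm, volume] g) x)
      = fun _ => (0 : ℂ) := by
    funext n
    exact step1 _ ((φ n).contDiff_normed (n := 2)) ((φ n).hasCompactSupport_normed) x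
  rw [hzero] at hlim
  exact (tendsto_nhds_unique tendsto_const_nhds hlim).symm

/-- div curl = 0 for a `C¹` field whose curl is `C¹`. -/
lemma divcurl_zero (X : E3 → Fin 3 → ℂ)
    (hX : ∀ i, ContDiff ℝ 1 (fun z => X z i))
    (hcurl : ∀ i, ContDiff ℝ 1 (fun z => curl3 X z i)) (x₀ : E3) :
    ∑ i, pdC i (fun z => curl3 X z i) x₀ = 0 := by
  let χ : ContDiffBump x₀ := ⟨1, 2, one_pos, one_lt_two⟩
  set V : E3 → Fin 3 → ℂ := fun z i => ((χ z : ℝ) : ℂ) * X z i with hVdef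
  have hχc : ContDiff ℝ 2 (fun z => χ z) := by exact_mod_cast χ.contDiff (n := 2)
  have hχcoe : ContDiff ℝ 1 (fun z => ((χ z : ℝ) : ℂ)) :=
    Complex.ofRealCLM.contDiff.comp (hχc.of_le (by norm_num))
  have hV : ∀ i, ContDiff ℝ 1 (fun z => V z i) := fun i => hχcoe.mul (hX i)
  have hχs : HasCompactSupport (fun z => ((χ z : ℝ) : ℂ)) :=
    χ.hasCompactSupport.comp_left (g := fun r : ℝ => (r : ℂ)) rfl
  have hcV : ∀ i, HasCompactSupport (fun z => V z i) := by
    intro i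
    apply hχs.mono'
    intro z hz
    apply subset_closure
    simp only [Function.mem_support, ne_eq] at hz ⊢
    intro h0
    apply hz
    show ((χ z : ℝ) : ℂ) * X z i = 0
    rw [h0, zero_mul]
  -- explicit formula for curl of V
  have hmul : ∀ (a : Fin 3) (b : Fin 3) (z : E3),
      pdC a (fun w => V w b) z
        = (pdR a (fun w => χ w) z : ℂ) * X z b + ((χ z : ℝ) : ℂ) * pdC a (fun w => X w b) z := by
    intro a b z
    exact pdC_real_mul ((hχc.differentiable (by norm_num)) z)
      (((hX b).differentiable (by norm_num)) z) a
  have hpdχ : ∀ a : Fin 3, ContDiff ℝ 1 (fun z => ((pdR a (fun w => χ w) z : ℝ) : ℂ)) :=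
    fun a => Complex.ofRealCLM.contDiff.comp (contDiff_pdR (n := 1) hχc a)
  have key : ∀ a b c d : Fin 3,
      ContDiff ℝ 1 (fun z => pdC a (fun w => X w b) z - pdC c (fun w => X w d) z) →
      ContDiff ℝ 1 (fun z => pdC a (fun w => V w b) z - pdC c (fun w => V w d) z) := by
    intro a b c d hc
    have hform : (fun z => pdC a (fun w => V w b) z - pdC c (fun w => V w d) z)
        = fun z => (((pdR a (fun w => χ w) z : ℝ) : ℂ) * X z b
            - ((pdR c (fun w => χ w) z : ℝ) : ℂ) * X z d)
          + ((χ z : ℝ) : ℂ) * (pdC a (fun w => X w b) z - pdC c (fun w => X w d) z) := by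
      funext z
      rw [hmul a b z, hmul c d z]
      ring
    rw [hform]
    exact (((hpdχ a).mul (hX b)).sub ((hpdχ c).mul (hX d))).add (hχcoe.mul hc)
  have hcurlV : ∀ i, ContDiff ℝ 1 (fun z => curl3 V z i) := by
    intro i
    fin_cases i
    · exact key 1 2 2 1 (hcurl 0)
    · exact key 2 0 0 2 (hcurl 1)
    · exact key 0 1 1 0 (hcurl 2)
  have hmain := divcurl_compact V hV hcV hcurlV x₀
  -- near x₀ the two curls agree
  have hcurl_eq : ∀ z ∈ Metric.ball x₀ (1 : ℝ), ∀ i : Fin 3, curl3 V z i = curl3 X z i := by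
    intro z hz
    have hpd_eq : ∀ a b : Fin 3, pdC a (fun w => V w b) z = pdC a (fun w => X w b) z := by
      intro a b
      have hev : (fun w => V w b) =ᶠ[𝓝 z] (fun w => X w b) := by
        filter_upwards [Metric.isOpen_ball.eventually_mem hz] with w hw
        have h1 : χ w = 1 := χ.one_of_mem_closedBall (Metric.ball_subset_closedBall hw)
        simp [hVdef, h1]
      unfold pdC
      rw [hev.fderiv_eq]
    intro i
    fin_cases i
    · show pdC 1 (fun w => V w 2) z - pdC 2 (fun w => V w 1) z = _
      rw [hpd_eq 1 2, hpd_eq 2 1]; rfl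
    · show pdC 2 (fun w => V w 0) z - pdC 0 (fun w => V w 2) z = _
      rw [hpd_eq 2 0, hpd_eq 0 2]; rfl
    · show pdC 0 (fun w => V w 1) z - pdC 1 (fun w => V w 0) z = _
      rw [hpd_eq 0 1, hpd_eq 1 0]; rfl
  have hlocal : ∀ i : Fin 3, pdC i (fun z => curl3 V z i) x₀ = pdC i (fun z => curl3 X z i) x₀ := by
    intro i
    unfold pdC
    congr 1
    apply Filter.EventuallyEq.fderiv_eq
    filter_upwards [Metric.isOpen_ball.eventually_mem (Metric.mem_ball_self one_pos)] with z hz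
    exact hcurl_eq z hz i
  rw [Fin.sum_univ_three] at hmain ⊢
  rw [← hlocal 0, ← hlocal 1, ← hlocal 2]
  exact hmain

/-! ### derivative of inverse -/

lemma pdR_inv {g : E3 → ℝ} {x : E3} (hg : DifferentiableAt ℝ g x) (hgx : g x ≠ 0) (j : Fin 3) :
    pdR j (fun w => (g w)⁻¹) x = -((g x) ^ 2)⁻¹ * pdR j g x := by
  have h := (hasDerivAt_inv hgx).comp_hasFDerivAt x hg.hasFDerivAt
  have h2 : fderiv ℝ (fun w => (g w)⁻¹) x = (-((g x) ^ 2)⁻¹) • fderiv ℝ g x := h.fderiv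
  simp [pdR, h2]

lemma pdC_zero {x : E3} (j : Fin 3) : pdC j (fun _ : E3 => (0 : ℂ)) x = 0 := by
  simp [pdC]

/-! ### the sigma-inverse curl component computation -/

lemma L1comp {σ : E3 → ℝ} {x : E3} (hσd : DifferentiableAt ℝ σ x) (hσne : σ x ≠ 0)
    {C1 C2 : E3 → ℂ} (h1 : DifferentiableAt ℝ C1 x) (h2 : DifferentiableAt ℝ C2 x)
    (a c : Fin 3) :
    pdC a (fun z => ((σ z)⁻¹ : ℝ) * C2 z) x - pdC c (fun z => ((σ z)⁻¹ : ℝ) * C1 z) x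
      = (((σ x)⁻¹ : ℝ) : ℂ) * ((pdC a C2 x - pdC c C1 x)
          - ((pdR a (fun w => Real.log (σ w)) x : ℂ) * C2 x
            - (pdR c (fun w => Real.log (σ w)) x : ℂ) * C1 x)) := by
  have hinv : DifferentiableAt ℝ (fun w => (σ w)⁻¹) x := hσd.inv hσne
  rw [pdC_real_mul hinv h2 a, pdC_real_mul hinv h1 c,
    pdR_inv hσd hσne a, pdR_inv hσd hσne c, pdR_log hσd hσne a, pdR_log hσd hσne c]
  push_cast
  have hc : ((σ x : ℝ) : ℂ) ≠ 0 := Complex.ofReal_ne_zero.mpr hσne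
  field_simp
  ring

/-! ### curl curl = grad div - laplacian -/

lemma curl_curl_eq (H : E3 → Fin 3 → ℂ) (hH : ContDiff ℝ 2 H) (x : E3) (i : Fin 3) :
    curl3 (fun z => curl3 H z) x i
      = pdC i (fun z => ∑ j, pdC j (fun w => H w j) z) x - lapC (fun z => H z i) x := by
  have hHc : ∀ b : Fin 3, ContDiff ℝ 2 (fun z => H z b) := fun b => (contDiff_pi.mp hH) b
  have hpdH : ∀ a b : Fin 3, ContDiff ℝ 1 (fun z => pdC a (fun w => H w b) z) :=
    fun a b => contDiff_pdC (n := 1) (hHc b) a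
  have hd : ∀ a b : Fin 3, DifferentiableAt ℝ (fun z => pdC a (fun w => H w b) z) x :=
    fun a b => ((hpdH a b).differentiable (by norm_num)) x
  have hsum : ∀ i : Fin 3, pdC i (fun z => ∑ j, pdC j (fun w => H w j) z) x
      = ∑ j, pdC i (pdC j (fun w => H w j)) x :=
    fun i => pdC_sum (fun j _ => hd j j) i
  have key0 : curl3 (fun z => curl3 H z) x 0
      = pdC 0 (fun z => ∑ j, pdC j (fun w => H w j) z) x - lapC (fun z => H z 0) x := by
    show pdC 1 (fun z => curl3 H z 2) x - pdC 2 (fun z => curl3 H z 1) x = _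
    have e2 : (fun z => curl3 H z 2)
        = fun z => pdC 0 (fun w => H w 1) z - pdC 1 (fun w => H w 0) z := rfl
    have e1 : (fun z => curl3 H z 1)
        = fun z => pdC 2 (fun w => H w 0) z - pdC 0 (fun w => H w 2) z := rfl
    rw [e2, e1, pdC_sub (hd 0 1) (hd 1 0) 1, pdC_sub (hd 2 0) (hd 0 2) 2, hsum 0]
    simp only [lapC, Fin.sum_univ_three]
    rw [pdC_comm (hHc 1) x 1 0, pdC_comm (hHc 2) x 2 0]
    ring
  have key1 : curl3 (fun z => curl3 H z) x 1
      = pdC 1 (fun z => ∑ j, pdC j (fun w => H w j) z) x - lapC (fun z => H z 1) x := by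
    show pdC 2 (fun z => curl3 H z 0) x - pdC 0 (fun z => curl3 H z 2) x = _
    have e0 : (fun z => curl3 H z 0)
        = fun z => pdC 1 (fun w => H w 2) z - pdC 2 (fun w => H w 1) z := rfl
    have e2 : (fun z => curl3 H z 2)
        = fun z => pdC 0 (fun w => H w 1) z - pdC 1 (fun w => H w 0) z := rfl
    rw [e0, e2, pdC_sub (hd 1 2) (hd 2 1) 2, pdC_sub (hd 0 1) (hd 1 0) 0, hsum 1]
    simp only [lapC, Fin.sum_univ_three]
    rw [pdC_comm (hHc 2) x 2 1, pdC_comm (hHc 0) x 0 1]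
    ring
  have key2 : curl3 (fun z => curl3 H z) x 2
      = pdC 2 (fun z => ∑ j, pdC j (fun w => H w j) z) x - lapC (fun z => H z 2) x := by
    show pdC 0 (fun z => curl3 H z 1) x - pdC 1 (fun z => curl3 H z 0) x = _
    have e1 : (fun z => curl3 H z 1)
        = fun z => pdC 2 (fun w => H w 0) z - pdC 0 (fun w => H w 2) z := rfl
    have e0 : (fun z => curl3 H z 0)
        = fun z => pdC 1 (fun w => H w 2) z - pdC 2 (fun w => H w 1) z := rfl
    rw [e1, e0, pdC_sub (hd 2 0) (hd 0 2) 0, pdC_sub (hd 1 2) (hd 2 1) 1, hsum 2]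
    simp only [lapC, Fin.sum_univ_three]
    rw [pdC_comm (hHc 0) x 0 2, pdC_comm (hHc 1) x 1 2]
    ring
  fin_cases i
  exacts [key0, key1, key2]

/-- Let `ω > 0` and `σ, μ : ℝ³ → ℝ` be `C²` with `σ ≥ σ₀ > 0`, `μ ≥ μ₀ > 0`; set
`α := log σ`, `β := log μ`. Then for every `C²` vector field `H : ℝ³ → ℂ³`, the curl–curl
equation `curl(σ⁻¹ curl H) − iωμH = 0` on `ℝ³` holds iff both
`−ΔH − ∇(∇β·H) − ∇α × curl H − iωσμH = 0` and `div(μH) = 0` hold on `ℝ³`. -/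
theorem curl_curl_iff_system (ω σ₀ μ₀ : ℝ) (hω : 0 < ω) (hσ₀ : 0 < σ₀) (hμ₀ : 0 < μ₀)
    (σ μ : (Fin 3 → ℝ) → ℝ) (hσ : ContDiff ℝ 2 σ) (hμ : ContDiff ℝ 2 μ)
    (hσlb : ∀ x, σ₀ ≤ σ x) (hμlb : ∀ x, μ₀ ≤ μ x)
    (H : (Fin 3 → ℝ) → (Fin 3 → ℂ)) (hH : ContDiff ℝ 2 H) :
    (∀ (x : Fin 3 → ℝ) (i : Fin 3),
        curl3 (fun z => fun j => ((σ z)⁻¹ : ℝ) * curl3 H z j) x i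
          - Complex.I * (ω : ℂ) * (μ x : ℂ) * H x i = 0)
    ↔ ((∀ (x : Fin 3 → ℝ) (i : Fin 3),
          -(lapC (fun z => H z i) x)
            - pdC i (fun z => ∑ j, (pdR j (fun w => Real.log (μ w)) z : ℂ) * H z j) x
            - crossC (fun j => (pdR j (fun w => Real.log (σ w)) x : ℂ)) (curl3 H x) i
            - Complex.I * (ω : ℂ) * (σ x : ℂ) * (μ x : ℂ) * H x i = 0)
        ∧ (∀ x : Fin 3 → ℝ, (∑ j, pdC j (fun z => (μ z : ℂ) * H z j) x) = 0)) := by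
  have hσne : ∀ y, σ y ≠ 0 := fun y => (lt_of_lt_of_le hσ₀ (hσlb y)).ne'
  have hμne : ∀ y, μ y ≠ 0 := fun y => (lt_of_lt_of_le hμ₀ (hμlb y)).ne'
  have hHc : ∀ b : Fin 3, ContDiff ℝ 2 (fun z => H z b) := fun b => (contDiff_pi.mp hH) b
  have hHc1 : ∀ b : Fin 3, ContDiff ℝ 1 (fun z => H z b) := fun b => (hHc b).of_le one_le_two
  have hpdH : ∀ a b : Fin 3, ContDiff ℝ 1 (fun z => pdC a (fun w => H w b) z) :=
    fun a b => contDiff_pdC (n := 1) (hHc b) a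
  have hcurlH1 : ∀ j : Fin 3, ContDiff ℝ 1 (fun z => curl3 H z j) := by
    intro j; fin_cases j
    · exact (hpdH 1 2).sub (hpdH 2 1)
    · exact (hpdH 2 0).sub (hpdH 0 2)
    · exact (hpdH 0 1).sub (hpdH 1 0)
  have hμcoe : ContDiff ℝ 1 (fun z => ((μ z : ℝ) : ℂ)) :=
    Complex.ofRealCLM.contDiff.comp (hμ.of_le one_le_two)
  have hdivH1 : ContDiff ℝ 1 (fun z => ∑ j, pdC j (fun w => H w j) z) :=
    ContDiff.sum (fun j _ => hpdH j j)
  have hlogμ : ContDiff ℝ 2 (fun w => Real.log (μ w)) := hμ.log hμne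
  have hb1 : ∀ j : Fin 3, ContDiff ℝ 1 (fun z => pdR j (fun w => Real.log (μ w)) z) :=
    fun j => contDiff_pdR (n := 1) hlogμ j
  have hβH1 : ContDiff ℝ 1 (fun z => ∑ j, (pdR j (fun w => Real.log (μ w)) z : ℂ) * H z j) :=
    ContDiff.sum fun j _ => (Complex.ofRealCLM.contDiff.comp (hb1 j)).mul (hHc1 j)
  -- divergence of μH in terms of u = div H + ∇β·H
  have hL4 : ∀ x : E3, (∑ j, pdC j (fun z => (μ z : ℂ) * H z j) x)
      = (μ x : ℂ) * ((∑ j, pdC j (fun w => H w j) x)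
          + ∑ j, (pdR j (fun w => Real.log (μ w)) x : ℂ) * H x j) := by
    intro x
    have hμd : DifferentiableAt ℝ μ x := hμ.differentiable two_ne_zero x
    have e : ∀ j : Fin 3, pdC j (fun z => (μ z : ℂ) * H z j) x
        = (pdR j μ x : ℂ) * H x j + (μ x : ℂ) * pdC j (fun w => H w j) x :=
      fun j => pdC_real_mul hμd ((hHc1 j).differentiable (by norm_num) x) j
    have elog : ∀ j : Fin 3, pdR j (fun w => Real.log (μ w)) x = (μ x)⁻¹ * pdR j μ x :=
      fun j => pdR_log hμd (hμne x) j
    have hc : ((μ x : ℝ) : ℂ) ≠ 0 := Complex.ofReal_ne_zero.mpr (hμne x)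
    simp only [Fin.sum_univ_three, e, elog]
    push_cast
    field_simp
    ring
  -- the master pointwise identity
  have master : ∀ (x : E3) (i : Fin 3),
      curl3 (fun z => fun j => ((σ z)⁻¹ : ℝ) * curl3 H z j) x i
          - Complex.I * (ω : ℂ) * (μ x : ℂ) * H x i
        = ((σ x : ℂ))⁻¹ *
          ((-(lapC (fun z => H z i) x)
              - pdC i (fun z => ∑ j, (pdR j (fun w => Real.log (μ w)) z : ℂ) * H z j) x
              - crossC (fun j => (pdR j (fun w => Real.log (σ w)) x : ℂ)) (curl3 H x) i
              - Complex.I * (ω : ℂ) * (σ x : ℂ) * (μ x : ℂ) * H x i)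
            + (pdC i (fun z => ∑ j, pdC j (fun w => H w j) z) x
                + pdC i (fun z => ∑ j, (pdR j (fun w => Real.log (μ w)) z : ℂ) * H z j) x)) := by
    intro x i
    have hσd : DifferentiableAt ℝ σ x := hσ.differentiable two_ne_zero x
    have hC : ∀ j : Fin 3, DifferentiableAt ℝ (fun z => curl3 H z j) x :=
      fun j => (hcurlH1 j).differentiable (by norm_num) x
    have l1 : curl3 (fun z => fun j => ((σ z)⁻¹ : ℝ) * curl3 H z j) x i
        = (((σ x)⁻¹ : ℝ) : ℂ) * ((curl3 (fun z => curl3 H z) x i)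
            - crossC (fun j => (pdR j (fun w => Real.log (σ w)) x : ℂ)) (curl3 H x) i) := by
      fin_cases i
      · exact L1comp hσd (hσne x) (hC 1) (hC 2) 1 2
      · exact L1comp hσd (hσne x) (hC 2) (hC 0) 2 0
      · exact L1comp hσd (hσne x) (hC 0) (hC 1) 0 1
    rw [l1, curl_curl_eq H hH x i]
    have hc : ((σ x : ℝ) : ℂ) ≠ 0 := Complex.ofReal_ne_zero.mpr (hσne x)
    push_cast
    field_simp
    ring
  constructor
  · intro h1
    have hdivμH : ∀ x : E3, (∑ j, pdC j (fun z => (μ z : ℂ) * H z j) x) = 0 := by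
      intro x
      have hG1 : ∀ j : Fin 3, ContDiff ℝ 1
          (fun z => (((σ z)⁻¹ : ℝ) : ℂ) * curl3 H z j) := fun j =>
        (Complex.ofRealCLM.contDiff.comp ((hσ.inv hσne).of_le one_le_two)).mul (hcurlH1 j)
      have hcurlG : ∀ i : Fin 3,
          (fun z => curl3 (fun z' => fun j => ((σ z')⁻¹ : ℝ) * curl3 H z' j) z i)
            = fun z => Complex.I * (ω : ℂ) * (μ z : ℂ) * H z i :=
        fun i => funext fun z => sub_eq_zero.mp (h1 z i)
      have hcurlG1 : ∀ i : Fin 3, ContDiff ℝ 1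
          (fun z => curl3 (fun z' => fun j => ((σ z')⁻¹ : ℝ) * curl3 H z' j) z i) := by
        intro i
        rw [hcurlG i]
        exact (contDiff_const.mul hμcoe).mul (hHc1 i)
      have hdc := divcurl_zero (fun z' => fun j => ((σ z')⁻¹ : ℝ) * curl3 H z' j) hG1 hcurlG1 x
      have htrans : ∀ i : Fin 3,
          pdC i (fun z => curl3 (fun z' => fun j => ((σ z')⁻¹ : ℝ) * curl3 H z' j) z i) x
            = (Complex.I * (ω : ℂ)) * pdC i (fun z => (μ z : ℂ) * H z i) x := by
        intro i
        rw [hcurlG i]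
        have hassoc : (fun z => Complex.I * (ω : ℂ) * (μ z : ℂ) * H z i)
            = fun z => (Complex.I * (ω : ℂ)) * ((μ z : ℂ) * H z i) := by
          funext z; ring
        rw [hassoc]
        exact pdC_const_mul ((hμcoe.mul (hHc1 i)).differentiable (by norm_num) x) _ i
      rw [Fin.sum_univ_three] at hdc ⊢
      rw [htrans 0, htrans 1, htrans 2] at hdc
      have hne : (Complex.I * (ω : ℂ)) ≠ 0 :=
        mul_ne_zero Complex.I_ne_zero (by exact_mod_cast hω.ne')
      have h2 : (Complex.I * (ω : ℂ)) * (pdC 0 (fun z => (μ z : ℂ) * H z 0) x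
          + pdC 1 (fun z => (μ z : ℂ) * H z 1) x + pdC 2 (fun z => (μ z : ℂ) * H z 2) x) = 0 := by
        linear_combination hdc
      exact (mul_eq_zero.mp h2).resolve_left hne
    have hu0 : ∀ y : E3, ((∑ j, pdC j (fun w => H w j) y)
        + ∑ j, (pdR j (fun w => Real.log (μ w)) y : ℂ) * H y j) = 0 := by
      intro y
      have h := hL4 y
      rw [hdivμH y] at h
      exact (mul_eq_zero.mp h.symm).resolve_left (Complex.ofReal_ne_zero.mpr (hμne y))
    refine ⟨?_, hdivμH⟩
    intro x i
    have hsplit : pdC i (fun z => ∑ j, pdC j (fun w => H w j) z) x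
        + pdC i (fun z => ∑ j, (pdR j (fun w => Real.log (μ w)) z : ℂ) * H z j) x = 0 := by
      rw [← pdC_add ((hdivH1.differentiable (by norm_num)) x) ((hβH1.differentiable (by norm_num)) x) i]
      have hfun : (fun z => (∑ j, pdC j (fun w => H w j) z)
          + ∑ j, (pdR j (fun w => Real.log (μ w)) z : ℂ) * H z j) = fun _ : E3 => (0 : ℂ) :=
        funext hu0
      rw [hfun]
      exact pdC_zero i
    have hm := master x i
    rw [h1 x i, hsplit, add_zero] at hm
    exact ((mul_eq_zero.mp hm.symm).resolve_left
      (inv_ne_zero (Complex.ofReal_ne_zero.mpr (hσne x))))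
  · rintro ⟨h1, h2⟩
    intro x i
    have hu0 : ∀ y : E3, ((∑ j, pdC j (fun w => H w j) y)
        + ∑ j, (pdR j (fun w => Real.log (μ w)) y : ℂ) * H y j) = 0 := by
      intro y
      have h := hL4 y
      rw [h2 y] at h
      exact (mul_eq_zero.mp h.symm).resolve_left (Complex.ofReal_ne_zero.mpr (hμne y))
    have hsplit : pdC i (fun z => ∑ j, pdC j (fun w => H w j) z) x
        + pdC i (fun z => ∑ j, (pdR j (fun w => Real.log (μ w)) z : ℂ) * H z j) x = 0 := by
      rw [← pdC_add ((hdivH1.differentiable (by norm_num)) x) ((hβH1.differentiable (by norm_num)) x) i]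
      have hfun : (fun z => (∑ j, pdC j (fun w => H w j) z)
          + ∑ j, (pdR j (fun w => Real.log (μ w)) z : ℂ) * H z j) = fun _ : E3 => (0 : ℂ) :=
        funext hu0
      rw [hfun]
      exact pdC_zero i
    have hm := master x i
    rw [h1 x i, hsplit] at hm
    simpa using hm
end
end

section
/- Let ω, σ₀, μ₀ > 0 and let ξ, ρ₁, ρ₂ ∈ ℝ³ satisfy |ρ₁| = |ρ₂| = 1 and ρ₁·ρ₂ = ρ₁·ξ = ρ₂·ξ = 0. For τ > 0 let s ∈ ℂ be the principal square root of 1 − |ξ|²/(4τ²) + iωσ₀μ₀/τ² (which is nonzero since its imaginary part is positive), and define ζ¹ := ξ/2 + iτρ₂ + τ s ρ₁ ∈ ℂ³ and ζ² := −ξ/2 + iτρ₂ + τ s ρ₁ ∈ ℂ³ (real vectors viewed inside ℂ³). Then ζ¹ − ζ² = ξ, and ζ¹·ζ¹ = ζ²·ζ² = iωσ₀μ₀, where for w ∈ ℂ³, w·w := Σⱼ wⱼ² is the bilinear dot product (no conjugation). -/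
/-!
Both vectors have the form `γ ξ + iτ ρ₂ + τ s ρ₁` with `γ = ±1/2`. Since `ρ₁, ρ₂, ξ` are
pairwise orthogonal and `ρ₁, ρ₂` are unit vectors, the bilinear square of such a vector is
`γ² |ξ|² + (iτ)² + (τ s)² = |ξ|²/4 - τ² + τ² s²`, and `τ² s² = τ² - |ξ|²/4 + iωσ₀μ₀` because
`s² = 1 - |ξ|²/(4τ²) + iωσ₀μ₀/τ²`.
-/

open Finset

theorem sum_sq_smul_add_smul_add_smul_of_orthonormal {ι R : Type*} [Fintype ι] [CommRing R]
    {a b c : ι → R} (hb : ∑ j, b j ^ 2 = 1) (hc : ∑ j, c j ^ 2 = 1)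
    (hbc : ∑ j, b j * c j = 0) (hba : ∑ j, b j * a j = 0) (hca : ∑ j, c j * a j = 0)
    (γ α β : R) :
    ∑ j, (γ * a j + α * c j + β * b j) ^ 2 = γ ^ 2 * ∑ j, a j ^ 2 + α ^ 2 + β ^ 2 := by
  have hexpand : ∀ j, (γ * a j + α * c j + β * b j) ^ 2
      = γ ^ 2 * a j ^ 2 + α ^ 2 * c j ^ 2 + β ^ 2 * b j ^ 2
        + 2 * α * β * (b j * c j) + 2 * γ * β * (b j * a j) + 2 * γ * α * (c j * a j) :=
    fun j => by ring
  simp only [hexpand, sum_add_distrib, ← mul_sum, hb, hc, hbc, hba, hca]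
  ring

theorem Complex.cpow_one_half_sq (z : ℂ) : (z ^ ((1 : ℂ) / 2)) ^ 2 = z := by
  rw [one_div]
  exact cpow_ofNat_inv_pow z 2

theorem cgo_phase_vectors_general (ω σ₀ μ₀ : ℝ)
    (ξ ρ₁ ρ₂ : Fin 3 → ℝ)
    (hρ₁ : ∑ j, ρ₁ j ^ 2 = 1) (hρ₂ : ∑ j, ρ₂ j ^ 2 = 1)
    (hρ₁ρ₂ : ∑ j, ρ₁ j * ρ₂ j = 0) (hρ₁ξ : ∑ j, ρ₁ j * ξ j = 0)
    (hρ₂ξ : ∑ j, ρ₂ j * ξ j = 0) (τ : ℝ) (hτ : 0 < τ) :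
    ∀ s ζ₁ ζ₂,
      s = ((1 : ℂ) - ((∑ j, ξ j ^ 2 : ℝ) : ℂ) / (4 * (τ : ℂ) ^ 2)
            + Complex.I * (ω : ℂ) * (σ₀ : ℂ) * (μ₀ : ℂ) / (τ : ℂ) ^ 2) ^ ((1 : ℂ) / 2) →
      ζ₁ = (fun j : Fin 3 => (ξ j : ℂ) / 2 + Complex.I * (τ : ℂ) * (ρ₂ j : ℂ)
              + (τ : ℂ) * s * (ρ₁ j : ℂ)) →
      ζ₂ = (fun j : Fin 3 => -(ξ j : ℂ) / 2 + Complex.I * (τ : ℂ) * (ρ₂ j : ℂ)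
              + (τ : ℂ) * s * (ρ₁ j : ℂ)) →
      (∀ j, ζ₁ j - ζ₂ j = (ξ j : ℂ)) ∧
      (∑ j, ζ₁ j ^ 2 = Complex.I * (ω : ℂ) * (σ₀ : ℂ) * (μ₀ : ℂ)) ∧
      (∑ j, ζ₂ j ^ 2 = Complex.I * (ω : ℂ) * (σ₀ : ℂ) * (μ₀ : ℂ)) := by
  rintro s ζ₁ ζ₂ hs rfl rfl
  have hτ0 : (τ : ℂ) ≠ 0 := by exact_mod_cast hτ.ne'
  have hτs : ((τ : ℂ) * s) ^ 2 = (τ : ℂ) ^ 2 - ((∑ j, ξ j ^ 2 : ℝ) : ℂ) / 4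
      + Complex.I * ω * σ₀ * μ₀ := by
    rw [mul_pow, hs, Complex.cpow_one_half_sq]
    field_simp
  have hsquare : ∀ γ : ℂ, ∑ j, (γ * ξ j + Complex.I * τ * ρ₂ j + τ * s * ρ₁ j) ^ 2
      = γ ^ 2 * ((∑ j, ξ j ^ 2 : ℝ) : ℂ) + (Complex.I * τ) ^ 2 + (τ * s) ^ 2 := fun γ => by
    push_cast
    exact sum_sq_smul_add_smul_add_smul_of_orthonormal (by exact_mod_cast hρ₁)
      (by exact_mod_cast hρ₂) (by exact_mod_cast hρ₁ρ₂) (by exact_mod_cast hρ₁ξ)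
      (by exact_mod_cast hρ₂ξ) γ _ _
  refine ⟨fun j => by ring, ?_, ?_⟩
  · have h := hsquare (1 / 2)
    simp only [one_div_mul_eq_div] at h
    linear_combination h + hτs + (τ : ℂ) ^ 2 * Complex.I_sq
  · have h := hsquare (-1 / 2)
    simp only [div_mul_eq_mul_div, neg_one_mul] at h
    linear_combination h + hτs + (τ : ℂ) ^ 2 * Complex.I_sq

/-- For `ω, σ₀, μ₀ > 0`, an orthonormal pair `ρ₁, ρ₂ ⟂ ξ` in `ℝ³` and `τ > 0`, with `s` the
principal square root of `1 − |ξ|²/(4τ²) + iωσ₀μ₀/τ²`, the vectors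
`ζ¹ = ξ/2 + iτρ₂ + τsρ₁` and `ζ² = −ξ/2 + iτρ₂ + τsρ₁` satisfy `ζ¹ − ζ² = ξ` and
`ζ¹·ζ¹ = ζ²·ζ² = iωσ₀μ₀` (bilinear dot product). -/
theorem cgo_phase_vectors (ω σ₀ μ₀ : ℝ) (hω : 0 < ω) (hσ₀ : 0 < σ₀) (hμ₀ : 0 < μ₀)
    (ξ ρ₁ ρ₂ : Fin 3 → ℝ)
    (hρ₁ : ∑ j, ρ₁ j ^ 2 = 1) (hρ₂ : ∑ j, ρ₂ j ^ 2 = 1)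
    (hρ₁ρ₂ : ∑ j, ρ₁ j * ρ₂ j = 0) (hρ₁ξ : ∑ j, ρ₁ j * ξ j = 0)
    (hρ₂ξ : ∑ j, ρ₂ j * ξ j = 0) (τ : ℝ) (hτ : 0 < τ) :
    ∀ s ζ₁ ζ₂,
      s = ((1 : ℂ) - ((∑ j, ξ j ^ 2 : ℝ) : ℂ) / (4 * (τ : ℂ) ^ 2)
            + Complex.I * (ω : ℂ) * (σ₀ : ℂ) * (μ₀ : ℂ) / (τ : ℂ) ^ 2) ^ ((1 : ℂ) / 2) →
      ζ₁ = (fun j : Fin 3 => (ξ j : ℂ) / 2 + Complex.I * (τ : ℂ) * (ρ₂ j : ℂ)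
              + (τ : ℂ) * s * (ρ₁ j : ℂ)) →
      ζ₂ = (fun j : Fin 3 => -(ξ j : ℂ) / 2 + Complex.I * (τ : ℂ) * (ρ₂ j : ℂ)
              + (τ : ℂ) * s * (ρ₁ j : ℂ)) →
      (∀ j, ζ₁ j - ζ₂ j = (ξ j : ℂ)) ∧
      (∑ j, ζ₁ j ^ 2 = Complex.I * (ω : ℂ) * (σ₀ : ℂ) * (μ₀ : ℂ)) ∧
      (∑ j, ζ₂ j ^ 2 = Complex.I * (ω : ℂ) * (σ₀ : ℂ) * (μ₀ : ℂ)) :=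
  cgo_phase_vectors_general ω σ₀ μ₀ ξ ρ₁ ρ₂ hρ₁ hρ₂ hρ₁ρ₂ hρ₁ξ hρ₂ξ τ hτ
end
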